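/- Let m1, m2 be natural numbers and let (A1, A2) be a bipartite assignment of the graph G₀ into K_{m1,m2} such that A1 ∩ A2 = {v1}. Then {|A1|, |A2|} = {3, 9}: one of the two sets is {v1, v2, v3} and the other is {v1} ∪ V_A ∪ V_B. In particular max(m1, m2) ≥ 9 and min(m1, m2) ≥ 3. -/

import Mathlib

/-- A minor model of `G` in `H`: a family of pairwise disjoint nonempty branch sets,
each inducing a connected subgraph of `H`, with an edge of `H` joining the branch sets
of any two adjacent vertices of `G`. -/
structure MinorModel {V W : Type*} (G : SimpleGraph V) (H : SimpleGraph W) where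
  B : V → Set W
  nonempty : ∀ v, (B v).Nonempty
  pairwiseDisjoint : ∀ ⦃u v : V⦄, u ≠ v → Disjoint (B u) (B v)
  connected : ∀ v, (H.induce (B v)).Connected
  edge : ∀ ⦃u v : V⦄, G.Adj u v → ∃ x ∈ B u, ∃ y ∈ B v, H.Adj x y

/-- `G` is a minor of `H`. -/
def SimpleGraph.IsMinorOf {V W : Type*} (G : SimpleGraph V) (H : SimpleGraph W) : Prop :=
  Nonempty (MinorModel G H)

/-- A bipartite assignment of `G` into the complete bipartite graph `K_{m1,m2}`. -/
def SimpleGraph.BipartiteAssignment {V : Type*} (G : SimpleGraph V) (m1 m2 : ℕ)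
    (A1 A2 : Set V) : Prop :=
  A1 ∪ A2 = Set.univ ∧ A1.ncard ≤ m1 ∧ A2.ncard ≤ m2 ∧
    ∀ ⦃u v : V⦄, G.Adj u v → (u ∈ A1 ∧ v ∈ A2) ∨ (u ∈ A2 ∧ v ∈ A1)

/-- `G − S` is bipartite, i.e. `S` is an odd cycle transversal of `G`. -/
def SimpleGraph.DelBipartite {V : Type*} (G : SimpleGraph V) (S : Set V) : Prop :=
  ∃ X Y : Set V, Disjoint X Y ∧ X ∪ Y = Sᶜ ∧
    ∀ ⦃u v : V⦄, G.Adj u v → u ∉ S → v ∉ S → (u ∈ X ∧ v ∈ Y) ∨ (u ∈ Y ∧ v ∈ X)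

/-- The vertex set of the example graph `G₀`. -/
inductive V0 : Type
  | v1 | v2 | v3 | a1 | a2 | a3 | a4 | b1 | b2 | b3 | b4
deriving DecidableEq

instance instFintypeV0 : Fintype V0 :=
  ⟨{V0.v1, V0.v2, V0.v3, V0.a1, V0.a2, V0.a3, V0.a4, V0.b1, V0.b2, V0.b3, V0.b4},
    by intro x; cases x <;> decide⟩

/-- The set `V_A = {a1, a2, a3, a4}`. -/
def VA : Set V0 := {V0.a1, V0.a2, V0.a3, V0.a4}

/-- The set `V_B = {b1, b2, b3, b4}`. -/
def VB : Set V0 := {V0.b1, V0.b2, V0.b3, V0.b4}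

/-- The example graph `G₀`: edges are `{v1,v2}`, `{v1,a}` and `{v2,a}` and `{v3,a}` for
all `a ∈ V_A`, and `{v3,b}` for all `b ∈ V_B`. -/
def G0 : SimpleGraph V0 :=
  SimpleGraph.fromRel fun x y =>
    (x = V0.v1 ∧ y = V0.v2) ∨ (x = V0.v1 ∧ y ∈ VA) ∨ (x = V0.v2 ∧ y ∈ VA) ∨
      (x = V0.v3 ∧ y ∈ VA) ∨ (x = V0.v3 ∧ y ∈ VB)

/-!
Since `A1 ∩ A2 = {v1}`, every vertex other than `v1` lies on exactly one side, and an edge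
leaving a one-sided vertex must land on the other side. Say `v2 ∈ A2`. Its neighbours `V_A` are
then forced into `A1` only; `v3`, adjacent to `a1`, is forced into `A2` only, and its neighbours
`V_B` into `A1` only. This determines both sides, and their sizes are `9` and `3`.
-/

theorem Set.notMem_of_inter_eq_singleton {α : Type*} {s t : Set α} {v w : α}
    (hst : s ∩ t = {w}) (hv : v ∈ s) (hne : v ≠ w) : v ∉ t :=
  fun hvt => hne (hst ▸ ⟨hv, hvt⟩ : v ∈ ({w} : Set α))

namespace SimpleGraph.BipartiteAssignment

variable {V : Type*} {G : SimpleGraph V} {m1 m2 : ℕ} {A1 A2 : Set V}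

theorem symm (h : G.BipartiteAssignment m1 m2 A1 A2) : G.BipartiteAssignment m2 m1 A2 A1 :=
  ⟨(Set.union_comm A2 A1).trans h.1, h.2.2.1, h.2.1, fun _ _ huv => (h.2.2.2 huv).symm⟩

theorem mem_left_of_adj (h : G.BipartiteAssignment m1 m2 A1 A2) {u v : V} (huv : G.Adj u v)
    (hu : u ∉ A1) : v ∈ A1 := by
  rcases h.2.2.2 huv with ⟨hu', -⟩ | ⟨-, hv⟩
  exacts [absurd hu' hu, hv]

theorem mem_left_or_mem_right (h : G.BipartiteAssignment m1 m2 A1 A2) (v : V) :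
    v ∈ A1 ∨ v ∈ A2 := by
  rw [← Set.mem_union, h.1]
  trivial

end SimpleGraph.BipartiteAssignment

theorem G0_adj_v2_of_mem_VA {a : V0} (ha : a ∈ VA) : G0.Adj V0.v2 a := by
  rcases ha with rfl | rfl | rfl | rfl <;> simp [G0, VA]

theorem G0_adj_v3_of_mem_VB {b : V0} (hb : b ∈ VB) : G0.Adj V0.v3 b := by
  rcases hb with rfl | rfl | rfl | rfl <;> simp [G0, VB]

theorem G0_assignment_eq_of_v2_mem_right {m1 m2 : ℕ} {A1 A2 : Set V0}
    (h : G0.BipartiteAssignment m1 m2 A1 A2) (hint : A1 ∩ A2 = {V0.v1}) (hv2 : V0.v2 ∈ A2) :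
    A1 = {V0.v1} ∪ VA ∪ VB ∧ A2 = {V0.v1, V0.v2, V0.v3} := by
  have hint' : A2 ∩ A1 = {V0.v1} := Set.inter_comm A2 A1 ▸ hint
  obtain ⟨hv1, hv1'⟩ : V0.v1 ∈ A1 ∩ A2 := hint ▸ rfl
  have hv2' : V0.v2 ∉ A1 := Set.notMem_of_inter_eq_singleton hint' hv2 (by decide)
  have hVA : ∀ a ∈ VA, a ∈ A1 ∧ a ∉ A2 := fun a ha =>
    have ha1 := h.mem_left_of_adj (G0_adj_v2_of_mem_VA ha) hv2'
    ⟨ha1, Set.notMem_of_inter_eq_singleton hint ha1 (by rintro rfl; simp [VA] at ha)⟩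
  have hv3 : V0.v3 ∈ A2 :=
    h.symm.mem_left_of_adj (u := V0.a1) (by simp [G0, VA]) (hVA _ (by simp [VA])).2
  have hv3' : V0.v3 ∉ A1 := Set.notMem_of_inter_eq_singleton hint' hv3 (by decide)
  have hVB : ∀ b ∈ VB, b ∈ A1 ∧ b ∉ A2 := fun b hb =>
    have hb1 := h.mem_left_of_adj (G0_adj_v3_of_mem_VB hb) hv3'
    ⟨hb1, Set.notMem_of_inter_eq_singleton hint hb1 (by rintro rfl; simp [VB] at hb)⟩
  simp only [VA, VB, Set.forall_mem_insert, Set.mem_singleton_iff, forall_eq] at hVA hVB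
  constructor <;> ext x <;> cases x <;> simp [VA, VB, *]

theorem ncard_v1_v2_v3 : ({V0.v1, V0.v2, V0.v3} : Set V0).ncard = 3 := by
  simp [Set.ncard_insert_of_notMem]

theorem ncard_v1_union_VA_union_VB : ({V0.v1} ∪ VA ∪ VB : Set V0).ncard = 9 := by
  simp [VA, VB, Set.ncard_insert_of_notMem]

/-- If `(A1, A2)` is a bipartite assignment of `G₀` into `K_{m1,m2}` with
`A1 ∩ A2 = {v1}`, then one of the two sets is `{v1, v2, v3}` (of size 3) and the other is
`{v1} ∪ V_A ∪ V_B` (of size 9); in particular `max m1 m2 ≥ 9` and `min m1 m2 ≥ 3`. -/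
theorem stmt8 (m1 m2 : ℕ) (A1 A2 : Set V0)
    (h : G0.BipartiteAssignment m1 m2 A1 A2) (hint : A1 ∩ A2 = {V0.v1}) :
    ((A1 = {V0.v1, V0.v2, V0.v3} ∧ A2 = {V0.v1} ∪ VA ∪ VB) ∨
      (A1 = {V0.v1} ∪ VA ∪ VB ∧ A2 = {V0.v1, V0.v2, V0.v3})) ∧
    9 ≤ max m1 m2 ∧ 3 ≤ min m1 m2 := by
  have hc1 := h.2.1
  have hc2 := h.2.2.1
  rcases h.mem_left_or_mem_right V0.v2 with hv2 | hv2
  · obtain ⟨rfl, rfl⟩ :=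
      G0_assignment_eq_of_v2_mem_right h.symm (Set.inter_comm A1 A2 ▸ hint) hv2
    rw [ncard_v1_v2_v3] at hc1
    rw [ncard_v1_union_VA_union_VB] at hc2
    exact ⟨Or.inl ⟨rfl, rfl⟩, by omega, by omega⟩
  · obtain ⟨rfl, rfl⟩ := G0_assignment_eq_of_v2_mem_right h hint hv2
    rw [ncard_v1_union_VA_union_VB] at hc1
    rw [ncard_v1_v2_v3] at hc2
    exact ⟨Or.inr ⟨rfl, rfl⟩, by omega, by omega⟩
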